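/- Let $X$ be a Banach space, $f : [a,b] \to X$ differentiable with Bochner-integrable derivative, and $t \in [0,1]$. Then $\left\| \int_a^b f(s)\,ds - (b-a)\left[t f(b) + (1-t) f(a)\right] \right\| \le \left[\frac{1}{2}(b-a) + \left|tb+(1-t)a - \frac{a+b}{2}\right|\right]\int_a^b \|f'(s)\|\,ds$. -/

import Mathlib

open MeasureTheory intervalIntegral

/-!
Integrating by parts against the kernel `s ↦ s - c`, with `c := (1 - w) b + w a` chosen so that the
boundary terms `(b - c) f(b) - (a - c) f(a)` are exactly the quadrature rule, turns the error into
`-∫ (s - c) f'(s) ds`. On `[a, b]` the kernel is bounded by the half-length of the interval plus the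
distance from `c` to the midpoint, and `c` is the reflection of `w b + (1 - w) a` in the midpoint.
-/

section

variable {X : Type*} [NormedAddCommGroup X] [NormedSpace ℝ X]

theorem integral_eq_sub_integral_sub_smul_deriv [CompleteSpace X] {a b : ℝ} (c : ℝ)
    {f f' : ℝ → X} (hderiv : ∀ t ∈ Set.uIcc a b, HasDerivAt f (f' t) t)
    (hint : IntervalIntegrable f' volume a b) :
    ∫ s in a..b, f s = (b - c) • f b - (a - c) • f a - ∫ s in a..b, (s - c) • f' s := by
  have hkernel : ∀ s ∈ Set.uIcc a b, HasDerivAt (fun s : ℝ ↦ s - c) 1 s :=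
    fun s _ ↦ (hasDerivAt_id s).sub_const c
  rw [integral_smul_deriv_eq_deriv_smul hkernel hderiv intervalIntegrable_const hint]
  simp only [one_smul, sub_sub_cancel]

theorem norm_integral_smul_le_mul_integral_norm {a b M : ℝ} (hab : a ≤ b) {φ : ℝ → ℝ}
    {g : ℝ → X} (hφ : ∀ s ∈ Set.Ioc a b, |φ s| ≤ M) (hg : IntervalIntegrable g volume a b) :
    ‖∫ s in a..b, φ s • g s‖ ≤ M * ∫ s in a..b, ‖g s‖ := by
  rw [← intervalIntegral.integral_const_mul]
  refine norm_integral_le_of_norm_le hab (Filter.Eventually.of_forall fun s hs ↦ ?_)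
    (hg.norm.const_mul M)
  rw [norm_smul, Real.norm_eq_abs]
  exact mul_le_mul_of_nonneg_right (hφ s hs) (norm_nonneg _)

end

theorem abs_sub_le_half_sub_add_abs_sub_midpoint {a b s : ℝ} (hs : s ∈ Set.Icc a b) (c : ℝ) :
    |s - c| ≤ (1 / 2) * (b - a) + |c - (a + b) / 2| := by
  have hmid : |s - (a + b) / 2| ≤ (1 / 2) * (b - a) := by
    rw [abs_le]
    constructor <;> linarith [hs.1, hs.2]
  linarith [abs_sub_le s ((a + b) / 2) c, abs_sub_comm c ((a + b) / 2)]

theorem stmt12 {X : Type*} [NormedAddCommGroup X] [NormedSpace ℝ X] [CompleteSpace X]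
    {a b : ℝ} (hab : a < b) {f f' : ℝ → X}
    (hderiv : ∀ t ∈ Set.Icc a b, HasDerivAt f (f' t) t)
    (hint : IntervalIntegrable f' volume a b) {w : ℝ} :
    ‖(∫ s in a..b, f s) - (b - a) • (w • f b + (1 - w) • f a)‖ ≤
      ((1 / 2) * (b - a) + |w * b + (1 - w) * a - (a + b) / 2|) * (∫ s in a..b, ‖f' s‖) := by
  set c := (1 - w) * b + w * a
  have hrule : (b - c) • f b - (a - c) • f a = (b - a) • (w • f b + (1 - w) • f a) := by
    simp only [c, smul_add, smul_smul]
    module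
  have herror : (∫ s in a..b, f s) - (b - a) • (w • f b + (1 - w) • f a) =
      -∫ s in a..b, (s - c) • f' s := by
    rw [integral_eq_sub_integral_sub_smul_deriv c (Set.uIcc_of_le hab.le ▸ hderiv) hint, hrule]
    abel
  rw [herror, norm_neg]
  refine norm_integral_smul_le_mul_integral_norm hab.le (fun s hs ↦ ?_) hint
  have hreflect : c - (a + b) / 2 = -(w * b + (1 - w) * a - (a + b) / 2) := by ring
  simpa only [hreflect, abs_neg] using
    abs_sub_le_half_sub_add_abs_sub_midpoint (Set.Ioc_subset_Icc_self hs) c
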